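/- As z → −1 within the slit plane, lim_{z→−1} κ₀(z)/√(1+z) = √2/π. -/

import Mathlib

/-!
Write `s = √(1+z)` and `w = √(1-z)` (principal branches). Since `Im (1-z) = -Im (1+z)`, the
arguments of `1-z` and `1+z` never add up past `π`, so `√(1-z²) = w s` on all of `ℂ`, and
`u := z + i√(1-z²) = s (s + i w) - 1`.

On the slit plane `Im u > 0`: if `u` were real, then `u² - 2uz + 1 = 0` would put
`z = (u + u⁻¹)/2` on one of the cuts, and the slit plane is star-shaped about `0`, where `u = i`.
Hence `log u = iπ + log (-u)`, i.e. `κ₀ z = (i/π) log (1 + T)` with `T = -s (s + i w) ≠ 0`, and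
`κ₀ z / s = (i/π) · (log (1 + T) / T) · (-(s + i w)) → (i/π) · 1 · (-i√2) = √2/π`.
-/

open Real Complex Filter

/-- The slit plane `ℂ \ [1,∞) \ (−∞,−1]`. -/
def Dslit : Set ℂ := {z : ℂ | ¬(z.im = 0 ∧ (1 ≤ z.re ∨ z.re ≤ -1))}

/-- Analytic extension of the degree-0 arc-cosine kernel to the slit plane. -/
noncomputable def K0C (z : ℂ) : ℂ :=
  ((Real.pi : ℂ) + Complex.I * Complex.log (z + Complex.I * ((1 - z ^ 2) ^ ((1 : ℂ) / 2))))
    / (Real.pi : ℂ)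

open Topology

namespace Complex

lemma mul_cpow_of_arg_add_arg_mem_Ioc {x y : ℂ} (c : ℂ) (hx : x ≠ 0) (hy : y ≠ 0)
    (h : x.arg + y.arg ∈ Set.Ioc (-π) π) : (x * y) ^ c = x ^ c * y ^ c := by
  simp only [cpow_def_of_ne_zero hx, cpow_def_of_ne_zero hy,
    cpow_def_of_ne_zero (mul_ne_zero hx hy), log_mul hx hy h, add_mul, exp_add]

lemma arg_add_arg_mem_Ioc_of_im_eq_neg {x y : ℂ} (him : x.im = -y.im) (hre : 0 < x.re + y.re) :
    x.arg + y.arg ∈ Set.Ioc (-π) π := by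
  have hx := neg_pi_lt_arg x
  have hy := neg_pi_lt_arg y
  have hx' := arg_le_pi x
  have hy' := arg_le_pi y
  rcases lt_trichotomy y.im 0 with hneg | hzero | hpos
  · have := arg_neg_iff.2 hneg
    have := arg_nonneg_iff.2 (by linarith : 0 ≤ x.im)
    constructor <;> linarith
  · rcases lt_or_ge 0 x.re with hxre | hxre
    · rw [arg_eq_zero_iff.2 ⟨hxre.le, by simp [him, hzero]⟩, zero_add]
      exact ⟨hy, hy'⟩
    · rw [arg_eq_zero_iff.2 ⟨by linarith, hzero⟩, add_zero]
      exact ⟨hx, hx'⟩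
  · have := arg_neg_iff.2 (by linarith : x.im < 0)
    have := arg_nonneg_iff.2 hpos.le
    constructor <;> linarith

lemma one_sub_sq_cpow {c : ℂ} (hc : c ≠ 0) (z : ℂ) :
    (1 - z ^ 2) ^ c = (1 - z) ^ c * (1 + z) ^ c := by
  rw [show 1 - z ^ 2 = (1 - z) * (1 + z) by ring]
  by_cases h₁ : 1 - z = 0
  · simp [h₁, zero_cpow hc]
  by_cases h₂ : 1 + z = 0
  · simp [h₂, zero_cpow hc]
  exact mul_cpow_of_arg_add_arg_mem_Ioc c h₁ h₂
    (arg_add_arg_mem_Ioc_of_im_eq_neg (by simp) (by norm_num))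

lemma cpow_half_mul_self (x : ℂ) : x ^ ((1 : ℂ) / 2) * x ^ ((1 : ℂ) / 2) = x := by
  rw [← sq, one_div]
  exact cpow_ofNat_inv_pow x 2

lemma tendsto_log_one_add_div_self :
    Tendsto (fun t : ℂ => log (1 + t) / t) (𝓝[≠] 0) (𝓝 1) := by
  simpa [div_eq_inv_mul] using (hasDerivAt_log one_mem_slitPlane).tendsto_slope_zero

end Complex

lemma zero_mem_Dslit : (0 : ℂ) ∈ Dslit := by norm_num [Dslit]

lemma starConvex_Dslit : StarConvex ℝ 0 Dslit := by
  intro y hy a b _ hb hab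
  simp only [Dslit, Set.mem_ofPred_eq, smul_zero, zero_add, real_smul, mul_re, mul_im, ofReal_re,
    ofReal_im, zero_mul, sub_zero, add_zero] at hy ⊢
  rintro ⟨him, hre⟩
  rcases hb.eq_or_lt with rfl | hb
  · norm_num at hre
  refine hy ⟨by simpa [hb.ne'] using him, ?_⟩
  rcases hre with hre | hre
  · left; nlinarith
  · right; nlinarith

lemma isPreconnected_Dslit : IsPreconnected Dslit :=
  (starConvex_Dslit.isPathConnected zero_mem_Dslit).isConnected.isPreconnected

lemma one_sub_sq_mem_slitPlane {z : ℂ} (hz : z ∈ Dslit) : 1 - z ^ 2 ∈ slitPlane := by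
  simp only [Dslit, Set.mem_ofPred_eq] at hz
  rw [mem_slitPlane_iff]
  by_contra! h
  simp only [sub_re, one_re, sub_im, one_im, sq, mul_re, mul_im] at h
  rcases mul_eq_zero.1 (by linarith [h.2] : z.re * z.im = 0) with h0 | h0
  · nlinarith [sq_nonneg z.im]
  · exact hz ⟨h0, by rw [h0] at h; by_contra! h'; nlinarith [h'.1, h'.2]⟩

/-- `e^{i arccos z}`, so that `K0C z = 1 - arccos z / π`. -/
noncomputable def expIArccos (z : ℂ) : ℂ := z + I * (1 - z ^ 2) ^ ((1 : ℂ) / 2)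

lemma continuousOn_expIArccos : ContinuousOn expIArccos Dslit := by
  unfold expIArccos
  have : ContinuousOn (fun z : ℂ => (1 - z ^ 2) ^ ((1 : ℂ) / 2)) Dslit :=
    (continuous_const.sub (continuous_pow 2)).continuousOn.cpow_const
      fun _ hz => one_sub_sq_mem_slitPlane hz
  fun_prop

lemma expIArccos_im_ne_zero {z : ℂ} (hz : z ∈ Dslit) : (expIArccos z).im ≠ 0 := by
  intro h
  set u := expIArccos z with hu
  have hquad : 2 * u * z = u ^ 2 + 1 := by
    have hsq := cpow_half_mul_self (1 - z ^ 2)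
    rw [hu, expIArccos]
    linear_combination hsq - ((1 - z ^ 2) ^ ((1 : ℂ) / 2)) ^ 2 * I_sq
  have hre := congrArg re hquad
  have him := congrArg im hquad
  simp only [mul_re, mul_im, sq, add_re, add_im, one_re, one_im, h, re_ofNat, im_ofNat] at hre him
  have hu0 : u.re ≠ 0 := by rintro h0; simp [h0] at hre
  have hzim : z.im = 0 := by simpa [hu0] using him
  refine hz ⟨hzim, ?_⟩
  rcases hu0.lt_or_gt with hneg | hpos
  · right; nlinarith [sq_nonneg (u.re + 1)]
  · left; nlinarith [sq_nonneg (u.re - 1)]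

lemma expIArccos_im_pos {z : ℂ} (hz : z ∈ Dslit) : 0 < (expIArccos z).im := by
  by_contra! h
  have h0 : expIArccos 0 = I := by simp [expIArccos]
  obtain ⟨y, hy, hy0⟩ := isPreconnected_Dslit.intermediate_value hz zero_mem_Dslit
    (continuous_im.comp_continuousOn continuousOn_expIArccos) ⟨h, by simp [h0]⟩
  exact expIArccos_im_ne_zero hy hy0

lemma K0C_eq_log_neg_expIArccos {z : ℂ} (hz : z ∈ Dslit) :
    K0C z = I * log (-expIArccos z) / π := by
  have hlog : log (-expIArccos z) = log (expIArccos z) - π * I := by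
    simp only [Complex.log, norm_neg, arg_neg_eq_arg_sub_pi_of_im_pos (expIArccos_im_pos hz)]
    push_cast; ring
  rw [K0C, hlog, ← expIArccos]
  ring_nf; rw [I_sq]; ring

lemma expIArccos_eq_cpow_half (z : ℂ) :
    expIArccos z =
      (1 + z) ^ ((1 : ℂ) / 2) * ((1 + z) ^ ((1 : ℂ) / 2) + I * (1 - z) ^ ((1 : ℂ) / 2)) - 1 := by
  rw [expIArccos, one_sub_sq_cpow (by norm_num) z]
  linear_combination -cpow_half_mul_self (1 + z)

lemma one_add_cpow_half_mul_ne_zero {z : ℂ} (hz : z ∈ Dslit) :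
    (1 + z) ^ ((1 : ℂ) / 2) * ((1 + z) ^ ((1 : ℂ) / 2) + I * (1 - z) ^ ((1 : ℂ) / 2)) ≠ 0 :=
    by
  intro h
  have := expIArccos_im_pos hz
  rw [expIArccos_eq_cpow_half, h] at this
  norm_num at this

lemma K0C_div_cpow_half_eq_log_mul {z : ℂ} (hz : z ∈ Dslit) :
    K0C z / (1 + z) ^ ((1 : ℂ) / 2) =
      I / π *
        (log (1 + -((1 + z) ^ ((1 : ℂ) / 2) *
            ((1 + z) ^ ((1 : ℂ) / 2) + I * (1 - z) ^ ((1 : ℂ) / 2)))) /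
          -((1 + z) ^ ((1 : ℂ) / 2) * ((1 + z) ^ ((1 : ℂ) / 2) + I * (1 - z) ^ ((1 : ℂ) / 2)))) *
        -((1 + z) ^ ((1 : ℂ) / 2) + I * (1 - z) ^ ((1 : ℂ) / 2)) := by
  have hsp := one_add_cpow_half_mul_ne_zero hz
  rw [K0C_eq_log_neg_expIArccos hz, expIArccos_eq_cpow_half]
  set s := (1 + z) ^ ((1 : ℂ) / 2)
  set p := s + I * (1 - z) ^ ((1 : ℂ) / 2)
  rw [show -(s * p - 1) = 1 + -(s * p) by ring]
  field_simp [left_ne_zero_of_mul hsp, right_ne_zero_of_mul hsp]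

lemma tendsto_one_add_cpow_half :
    Tendsto (fun z : ℂ => (1 + z) ^ ((1 : ℂ) / 2)) (𝓝 (-1)) (𝓝 0) := by
  have h0 : Tendsto (fun x : ℂ => x ^ ((1 : ℂ) / 2)) (𝓝 0) (𝓝 0) := by
    simpa using (continuousAt_cpow_const_of_re_pos (z := 0) (w := 1 / 2) (by simp)
      (by norm_num)).tendsto
  exact h0.comp ((continuous_const.add continuous_id).tendsto' (-1) 0 (by norm_num))

lemma tendsto_one_sub_cpow_half :
    Tendsto (fun z : ℂ => (1 - z) ^ ((1 : ℂ) / 2)) (𝓝 (-1)) (𝓝 (√2 : ℝ)) := by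
  have hval : (2 : ℂ) ^ ((1 : ℂ) / 2) = (√2 : ℝ) := by
    rw [Real.sqrt_eq_rpow, ofReal_cpow zero_le_two]; norm_num
  have h2 : Tendsto (fun x : ℂ => x ^ ((1 : ℂ) / 2)) (𝓝 2) (𝓝 (√2 : ℝ)) :=
    hval ▸ (continuousAt_cpow_const (by simp)).tendsto
  exact h2.comp ((continuous_const.sub continuous_id).tendsto' (-1) 2 (by norm_num))

theorem k0_expansion_at_minus_one :
    Tendsto (fun z : ℂ => K0C z / ((1 + z) ^ ((1 : ℂ) / 2)))
      (nhdsWithin (-1) Dslit)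
      (nhds ((Real.sqrt 2 / Real.pi : ℝ) : ℂ)) := by
  have hsum := tendsto_one_add_cpow_half.add (tendsto_one_sub_cpow_half.const_mul I)
  have hprod :=
    (tendsto_one_add_cpow_half.mul hsum).neg.mono_left (nhdsWithin_le_nhds (s := Dslit))
  rw [zero_mul, neg_zero] at hprod
  have hT := tendsto_nhdsWithin_of_tendsto_nhds_of_eventually_within _ hprod
    (eventually_nhdsWithin_of_forall fun z hz =>
      Set.mem_compl_singleton_iff.2 (neg_ne_zero.2 (one_add_cpow_half_mul_ne_zero hz)))
  have hlim := ((tendsto_log_one_add_div_self.comp hT).const_mul (I / π)).mul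
    (hsum.neg.mono_left nhdsWithin_le_nhds)
  convert hlim.congr' (eventually_nhdsWithin_of_forall fun z hz =>
    (K0C_div_cpow_half_eq_log_mul hz).symm) using 2
  push_cast
  ring_nf; rw [I_sq]; ring
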